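/- arXiv:1401.4206 — 2 statements merged into one kernel-verified Lean document; each statement's English description precedes it below -/
import Mathlib

section
/- Let (𝒳, ℬ, P) be a probability space and T : 𝒳 → 𝒳 a measurable P-preserving map. For B ∈ ℬ and natural numbers q < n, set A = B \ ⋃_{j=1}^{q} T^{-j}(B), and for a set E let 𝒲_{0,n}(E) = ⋂_{i=0}^{n-1} T^{-i}(Eᶜ). Then |P(𝒲_{0,n}(B)) − P(𝒲_{0,n}(A))| ≤ ∑_{j=1}^{q} P(𝒲_{0,n}(A) ∩ T^{-(n-j)}(B \ A)). -/
open MeasureTheory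

/-- The event of avoiding `A` during the time window `[s, s+ℓ)`. -/
def avoidWindow {X : Type*} (T : X → X) (s ℓ : ℕ) (A : Set X) : Set X :=
  ⋂ i ∈ Finset.Ico s (s + ℓ), T^[i] ⁻¹' Aᶜ

lemma mem_avoidWindow_iff {X : Type*} (T : X → X) (n : ℕ) (E : Set X) (x : X) :
    x ∈ avoidWindow T 0 n E ↔ ∀ i < n, T^[i] x ∉ E := by
  simp [avoidWindow, Set.mem_iInter]

theorem relation_balls_annuli {X : Type*} [MeasurableSpace X] (μ : Measure X)
    [IsProbabilityMeasure μ] (T : X → X) (hT : MeasurePreserving T μ μ)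
    (B : Set X) (hB : MeasurableSet B) (q n : ℕ) (hqn : q < n)
    (A : Set X) (hA : A = B \ ⋃ j ∈ Finset.Icc 1 q, T^[j] ⁻¹' B) :
    |(μ (avoidWindow T 0 n B)).toReal - (μ (avoidWindow T 0 n A)).toReal| ≤
      ∑ j ∈ Finset.Icc 1 q,
        (μ (avoidWindow T 0 n A ∩ T^[n - j] ⁻¹' (B \ A))).toReal := by
  classical
  set WA := avoidWindow T 0 n A with hWAdef
  set WB := avoidWindow T 0 n B with hWBdef
  have hsub : WB ⊆ WA := by
    intro x hx
    rw [mem_avoidWindow_iff] at hx ⊢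
    intro i hi hmem
    exact hx i hi (hA ▸ hmem).1
  have hkey : WA \ WB ⊆
      ⋃ j ∈ Finset.Icc 1 q, (WA ∩ T^[n - j] ⁻¹' (B \ A)) := by
    rintro x ⟨hxA, hxB⟩
    rw [hWAdef, mem_avoidWindow_iff] at hxA
    rw [hWBdef, mem_avoidWindow_iff] at hxB
    push_neg at hxB
    obtain ⟨i, hi, hiB⟩ := hxB
    set P : ℕ → Prop := fun k => T^[k] x ∈ B with hP
    set i0 := Nat.findGreatest P (n - 1) with hi0
    have hile : i ≤ n - 1 := Nat.le_sub_one_of_lt hi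
    have hPi0 : P i0 := Nat.findGreatest_spec hile hiB
    have hi0lt : i0 < n := lt_of_le_of_lt (Nat.findGreatest_le _) (by omega)
    have hnotA : T^[i0] x ∉ A := hxA i0 hi0lt
    have hmemU : T^[i0] x ∈ ⋃ j ∈ Finset.Icc 1 q, T^[j] ⁻¹' B := by
      by_contra h
      exact hnotA (hA ▸ ⟨hPi0, h⟩)
    simp only [Set.mem_iUnion, Set.mem_preimage, Finset.mem_Icc] at hmemU
    obtain ⟨j, ⟨hj1, hjq⟩, hjB⟩ := hmemU
    have hcomb : P (j + i0) := by
      rw [hP]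
      simpa [Function.iterate_add_apply] using hjB
    have hge : n ≤ j + i0 := by
      by_contra h
      have hle2 : j + i0 ≤ n - 1 := by omega
      have := Nat.le_findGreatest hle2 hcomb
      omega
    refine Set.mem_biUnion (show n - i0 ∈ Finset.Icc 1 q by
      simp only [Finset.mem_Icc]; omega) ?_
    have hxWA : x ∈ WA := by rw [hWAdef, mem_avoidWindow_iff]; exact hxA
    refine ⟨hxWA, ?_⟩
    show T^[n - (n - i0)] x ∈ B \ A
    have heq : n - (n - i0) = i0 := by omega
    rw [heq]
    exact ⟨hPi0, hnotA⟩
  have hTm := hT.measurable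
  have hAm : MeasurableSet A := by
    rw [hA]
    exact hB.diff (Finset.measurableSet_biUnion _ fun j _ => (hTm.iterate j) hB)
  have hWAm : MeasurableSet WA :=
    Finset.measurableSet_biInter _ fun i _ => (hTm.iterate i) hAm.compl
  have hWBm : MeasurableSet WB :=
    Finset.measurableSet_biInter _ fun i _ => (hTm.iterate i) hB.compl
  have h1 : μ WB ≤ μ WA := measure_mono hsub
  have h2 : μ WA ≤ μ WB + μ (WA \ WB) := by
    refine le_trans (measure_mono ?_) (measure_union_le _ _)
    intro x hx
    by_cases h : x ∈ WB
    · exact Or.inl h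
    · exact Or.inr ⟨hx, h⟩
  have h3 : μ (WA \ WB) ≤ ∑ j ∈ Finset.Icc 1 q, μ (WA ∩ T^[n - j] ⁻¹' (B \ A)) :=
    le_trans (measure_mono hkey) (measure_biUnion_finset_le _ _)
  have hfin : ∀ s : Set X, μ s ≠ ⊤ := fun s => measure_ne_top μ s
  rw [abs_sub_comm, abs_of_nonneg (sub_nonneg.2 (ENNReal.toReal_mono (hfin _) h1))]
  have h2' : (μ WA).toReal ≤ (μ WB).toReal + (μ (WA \ WB)).toReal := by
    have := ENNReal.toReal_mono (by finiteness) h2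
    rwa [ENNReal.toReal_add (hfin _) (hfin _)] at this
  have h3' : (μ (WA \ WB)).toReal ≤
      ∑ j ∈ Finset.Icc 1 q, (μ (WA ∩ T^[n - j] ⁻¹' (B \ A))).toReal := by
    have := ENNReal.toReal_mono (by
      refine (ENNReal.sum_lt_top.2 fun j _ => ?_).ne
      exact (measure_lt_top μ _)) h3
    rwa [ENNReal.toReal_sum (fun j _ => hfin _)] at this
  linarith
end

section
/- Let (𝒳, ℬ, P) be a probability space and T measure-preserving, A ∈ ℬ, and 𝒲_{s,ℓ}(A) as before. Then for all natural numbers s, t, m: |P(𝒲_{0,s}(A) ∩ 𝒲_{s+t,m}(A)) − P(𝒲_{0,m}(A))(1 − s·P(A))| ≤ |s·P(A)·P(𝒲_{0,m}(A)) − ∑_{j=0}^{s-1} P(A ∩ 𝒲_{s+t-j,m}(A))| + 2s · ∑_{j=1}^{s-1} P(A ∩ T^{-j}(A)). -/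
/-! Put `W = 𝒲_{s+t,m}(A)` and `C_j = T^{-j}A ∩ W`. Then `𝒲_{0,s}(A) ∩ W` is `W` minus
`⋃_{j<s} C_j`, and `P(W) = P(𝒲_{0,m}(A))` by invariance. The union is squeezed between the first
two Bonferroni bounds: shifting by `T^j` turns `∑ P(C_j)` into `∑ P(A ∩ 𝒲_{s+t-j,m}(A))`, and the
overlaps satisfy `P(C_j ∩ C_k) ≤ P(A ∩ T^{-(j-k)}A)`, which add up to at most
`s ∑_{1 ≤ i < s} P(A ∩ T^{-i}A)`. -/

open MeasureTheory

open Finset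

theorem sum_sub_sum_inter_le_measureReal_biUnion_range {X : Type*} [MeasurableSpace X]
    (μ : Measure X) [IsFiniteMeasure μ] {C : ℕ → Set X} (hC : ∀ j, MeasurableSet (C j)) (s : ℕ) :
    ∑ j ∈ range s, μ.real (C j) - ∑ j ∈ range s, ∑ k ∈ range j, μ.real (C j ∩ C k) ≤
      μ.real (⋃ j ∈ range s, C j) := by
  induction s with
  | zero => simp
  | succ n ih =>
    set U := ⋃ j ∈ range n, C j
    have hUC : U ∩ C n = ⋃ k ∈ range n, C n ∩ C k := by
      rw [Set.iUnion₂_inter]; simp only [Set.inter_comm]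
    have hunion := measureReal_union_add_inter (μ := μ) (hC n) (measure_ne_top μ U)
    have hinter : μ.real (U ∩ C n) ≤ ∑ k ∈ range n, μ.real (C n ∩ C k) :=
      hUC ▸ measureReal_biUnion_finset_le _ _
    rw [sum_range_succ, sum_range_succ, range_add_one, Finset.set_biUnion_insert, Set.union_comm]
    linarith

theorem sum_range_sum_range_sub_le {M : Type*} [AddCommMonoid M] [PartialOrder M]
    [IsOrderedAddMonoid M] {f : ℕ → M} (hf : ∀ i, 0 ≤ f i) (s : ℕ) :
    ∑ j ∈ range s, ∑ k ∈ range j, f (j - k) ≤ s • ∑ i ∈ Ico 1 s, f i := by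
  calc ∑ j ∈ range s, ∑ k ∈ range j, f (j - k) ≤ ∑ _j ∈ range s, ∑ i ∈ Ico 1 s, f i := ?_
    _ = s • ∑ i ∈ Ico 1 s, f i := by rw [sum_const, card_range]
  refine sum_le_sum fun j hj => ?_
  rw [range_eq_Ico, sum_Ico_reflect f 0 (Nat.le_succ j), Nat.add_sub_cancel_left, Nat.sub_zero]
  exact sum_le_sum_of_subset_of_nonneg (Ico_subset_Ico_right (mem_range.1 hj)) fun i _ _ => hf i

section avoidWindow

variable {X : Type*} {T : X → X} {A : Set X}

theorem mem_avoidWindow {s ℓ : ℕ} {x : X} :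
    x ∈ avoidWindow T s ℓ A ↔ ∀ i < ℓ, T^[s + i] x ∉ A := by
  simp only [avoidWindow, Set.mem_iInter, mem_Ico, Set.mem_preimage, Set.mem_compl_iff]
  refine ⟨fun h i hi => h (s + i) ⟨le_add_right le_rfl, by omega⟩, fun h i hi => ?_⟩
  simpa only [Nat.add_sub_cancel' hi.1] using h (i - s) (by omega)

theorem preimage_iterate_avoidWindow (j r ℓ : ℕ) :
    T^[j] ⁻¹' avoidWindow T r ℓ A = avoidWindow T (r + j) ℓ A := by
  ext x
  simp only [Set.mem_preimage, mem_avoidWindow, ← Function.iterate_add_apply,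
    Nat.add_right_comm r j]

theorem avoidWindow_zero_eq_compl (s : ℕ) :
    avoidWindow T 0 s A = (⋃ j ∈ range s, T^[j] ⁻¹' A)ᶜ := by
  ext x
  simp [mem_avoidWindow]

variable [MeasurableSpace X]

theorem measurableSet_avoidWindow (hT : Measurable T) (hA : MeasurableSet A) (s ℓ : ℕ) :
    MeasurableSet (avoidWindow T s ℓ A) :=
  .biInter (Ico s (s + ℓ)).countable_toSet fun i _ => hT.iterate i hA.compl

variable {μ : Measure X}

theorem measureReal_avoidWindow_zero_inter [IsFiniteMeasure μ] (hT : Measurable T)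
    (hA : MeasurableSet A) (s : ℕ) (W : Set X) :
    μ.real (avoidWindow T 0 s A ∩ W) = μ.real W - μ.real (⋃ j ∈ range s, T^[j] ⁻¹' A ∩ W) := by
  have hU : MeasurableSet (⋃ j ∈ range s, T^[j] ⁻¹' A) :=
    .biUnion (range s).countable_toSet fun j _ => hT.iterate j hA
  rw [← measureReal_sdiff_add_inter (s := W) hU, avoidWindow_zero_eq_compl, Set.inter_comm,
    ← Set.sdiff_eq, Set.inter_iUnion₂]
  simp only [Set.inter_comm W, add_sub_cancel_right]

theorem MeasureTheory.MeasurePreserving.measureReal_avoidWindow (hT : MeasurePreserving T μ μ)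
    (hA : MeasurableSet A) (s ℓ : ℕ) :
    μ.real (avoidWindow T s ℓ A) = μ.real (avoidWindow T 0 ℓ A) := by
  rw [← zero_add s, ← preimage_iterate_avoidWindow, (hT.iterate s).measureReal_preimage
    (measurableSet_avoidWindow hT.measurable hA 0 ℓ).nullMeasurableSet]

theorem MeasureTheory.MeasurePreserving.measureReal_preimage_iterate_inter
    (hT : MeasurePreserving T μ μ) (hA : MeasurableSet A) {j k : ℕ} (hkj : k ≤ j) :
    μ.real (T^[j] ⁻¹' A ∩ T^[k] ⁻¹' A) = μ.real (A ∩ T^[j - k] ⁻¹' A) := by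
  rw [← Nat.sub_add_cancel hkj, Function.iterate_add, Set.preimage_comp, ← Set.preimage_inter,
    (hT.iterate k).measureReal_preimage ((hT.measurable.iterate _ hA).inter hA).nullMeasurableSet,
    Set.inter_comm, Nat.add_sub_cancel]

theorem MeasureTheory.MeasurePreserving.measureReal_preimage_iterate_inter_avoidWindow
    (hT : MeasurePreserving T μ μ) (hA : MeasurableSet A) {j r : ℕ} (hjr : j ≤ r) (ℓ : ℕ) :
    μ.real (T^[j] ⁻¹' A ∩ avoidWindow T r ℓ A) = μ.real (A ∩ avoidWindow T (r - j) ℓ A) := by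
  rw [← (hT.iterate j).measureReal_preimage
      (hA.inter (measurableSet_avoidWindow hT.measurable hA _ _)).nullMeasurableSet,
    Set.preimage_inter, preimage_iterate_avoidWindow, Nat.sub_add_cancel hjr]

end avoidWindow

theorem MeasureTheory.MeasurePreserving.sum_measureReal_preimage_iterate_inter_le
    {X : Type*} [MeasurableSpace X] {μ : Measure X} {T : X → X} (hT : MeasurePreserving T μ μ)
    {A : Set X} (hA : MeasurableSet A) (s : ℕ) :
    ∑ j ∈ range s, ∑ k ∈ range j, μ.real (T^[j] ⁻¹' A ∩ T^[k] ⁻¹' A) ≤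
      s * ∑ i ∈ Ico 1 s, μ.real (A ∩ T^[i] ⁻¹' A) := by
  calc _ = ∑ j ∈ range s, ∑ k ∈ range j, μ.real (A ∩ T^[j - k] ⁻¹' A) :=
        sum_congr rfl fun j _ => sum_congr rfl fun k hk =>
          hT.measureReal_preimage_iterate_inter hA (mem_range.1 hk).le
    _ ≤ _ := by
        simpa only [nsmul_eq_mul] using
          sum_range_sum_range_sub_le (fun i => measureReal_nonneg (s := A ∩ T^[i] ⁻¹' A)) s

theorem inductive_step_estimate {X : Type*} [MeasurableSpace X] (μ : Measure X)
    [IsProbabilityMeasure μ] (T : X → X) (hT : MeasurePreserving T μ μ)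
    (A : Set X) (hA : MeasurableSet A) (s t m : ℕ) :
    |(μ (avoidWindow T 0 s A ∩ avoidWindow T (s + t) m A)).toReal -
        (μ (avoidWindow T 0 m A)).toReal * (1 - (s : ℝ) * (μ A).toReal)| ≤
      |(s : ℝ) * (μ A).toReal * (μ (avoidWindow T 0 m A)).toReal -
          ∑ j ∈ Finset.range s, (μ (A ∩ avoidWindow T (s + t - j) m A)).toReal| +
        2 * (s : ℝ) * ∑ j ∈ Finset.Ico 1 s, (μ (A ∩ T^[j] ⁻¹' A)).toReal := by
  set W := avoidWindow T (s + t) m A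
  set C : ℕ → Set X := fun j => T^[j] ⁻¹' A ∩ W
  set E := ∑ j ∈ Ico 1 s, μ.real (A ∩ T^[j] ⁻¹' A)
  have hC : ∀ j, MeasurableSet (C j) := fun j =>
    (hT.measurable.iterate j hA).inter (measurableSet_avoidWindow hT.measurable hA _ _)
  have hsplit : μ.real (avoidWindow T 0 s A ∩ W) =
      μ.real (avoidWindow T 0 m A) - μ.real (⋃ j ∈ range s, C j) := by
    rw [measureReal_avoidWindow_zero_inter hT.measurable hA, hT.measureReal_avoidWindow hA]
  have hfirst : ∑ j ∈ range s, μ.real (C j) =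
      ∑ j ∈ range s, μ.real (A ∩ avoidWindow T (s + t - j) m A) :=
    sum_congr rfl fun j hj => hT.measureReal_preimage_iterate_inter_avoidWindow hA
      (by have := mem_range.1 hj; omega) m
  have hsecond : ∑ j ∈ range s, ∑ k ∈ range j, μ.real (C j ∩ C k) ≤ s * E :=
    (sum_le_sum fun j _ => sum_le_sum fun k _ => measureReal_mono
      (Set.inter_subset_inter Set.inter_subset_left Set.inter_subset_left)).trans
      (hT.sum_measureReal_preimage_iterate_inter_le hA s)
  have hlower := sum_sub_sum_inter_le_measureReal_biUnion_range μ hC s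
  have hupper := measureReal_biUnion_finset_le (μ := μ) (range s) C
  have hE : 0 ≤ (s : ℝ) * E := mul_nonneg s.cast_nonneg (sum_nonneg fun _ _ => measureReal_nonneg)
  have hgap : |∑ j ∈ range s, μ.real (C j) - μ.real (⋃ j ∈ range s, C j)| ≤ 2 * s * E := by
    rw [abs_of_nonneg (by linarith)]
    linarith
  simp only [← measureReal_def]
  rw [hsplit, ← hfirst]
  calc _ = |((s : ℝ) * μ.real A * μ.real (avoidWindow T 0 m A) - ∑ j ∈ range s, μ.real (C j)) +
        (∑ j ∈ range s, μ.real (C j) - μ.real (⋃ j ∈ range s, C j))| := by congr 1; ring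
    _ ≤ _ := (abs_add_le _ _).trans (by linarith)
end
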